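/- arXiv:1805.11699 — 3 statements merged into one kernel-verified Lean document; each statement's English description precedes it below -/
import Mathlib

section
/- Let P0, P1 be symmetric positive definite, A = (1/2) P0^{1/2} log(P0^{-1/2} P1 P0^{-1/2}) P0^{-1/2}, and P_t = exp(At) P0 exp(A't). Then P_t = P0^{1/2} (P0^{-1/2} P1 P0^{-1/2})^t P0^{1/2} for all real t, where the fractional power is defined via the matrix exponential and logarithm of the SPD matrix P0^{-1/2} P1 P0^{-1/2}. -/
/-!
Write `S = P0^{1/2}`, which is symmetric with `S * S = P0`. Then `t • A = S (t/2 • L) S⁻¹`, and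
since `S` and `L` are symmetric, `t • Aᵀ = S⁻¹ (t/2 • L) S`. Exponentials commute with conjugation,
so `exp (t • A) P0 exp (t • Aᵀ) = S exp (t/2 • L) (S⁻¹ S S S⁻¹) exp (t/2 • L) S = S exp (t • L) S`.
-/

open Matrix

/-- The symmetric positive definite square root of a positive definite matrix. -/
noncomputable def sqrtm {n : ℕ} {P : Matrix (Fin n) (Fin n) ℝ} (hP : P.PosDef) :
    Matrix (Fin n) (Fin n) ℝ :=
  (hP.posSemidef.1.eigenvectorUnitary : Matrix (Fin n) (Fin n) ℝ) *
    diagonal ((↑) ∘ (√·) ∘ hP.posSemidef.1.eigenvalues) *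
    (star hP.posSemidef.1.eigenvectorUnitary : Matrix (Fin n) (Fin n) ℝ)

/-- Squared Frobenius norm of a real matrix. -/
noncomputable def frobSq {n : ℕ} (M : Matrix (Fin n) (Fin n) ℝ) : ℝ := (M * Mᵀ).trace

open NormedSpace

section

variable {n : ℕ} {P : Matrix (Fin n) (Fin n) ℝ}

theorem sqrtm_mul_self (hP : P.PosDef) : sqrtm hP * sqrtm hP = P := by
  set U : Matrix (Fin n) (Fin n) ℝ := hP.posSemidef.1.eigenvectorUnitary.1
  have hUU : star U * U = 1 := Unitary.coe_star_mul_self _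
  have conj_sq : ∀ D : Matrix (Fin n) (Fin n) ℝ,
      U * D * star U * (U * D * star U) = U * (D * D) * star U := fun D => by
    calc U * D * star U * (U * D * star U) = U * D * (star U * U) * D * star U := by
          simp only [Matrix.mul_assoc]
      _ = _ := by rw [hUU, Matrix.mul_one, Matrix.mul_assoc U D]
  have hspec := hP.posSemidef.1.spectral_theorem
  rw [Unitary.conjStarAlgAut_apply] at hspec
  conv_rhs => rw [hspec]
  rw [sqrtm, conj_sq, diagonal_mul_diagonal]
  congr 3
  funext i
  simp [Real.mul_self_sqrt (hP.posSemidef.eigenvalues_nonneg i)]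

theorem isSymm_sqrtm (hP : P.PosDef) : (sqrtm hP).IsSymm := by
  simp [IsSymm, sqrtm, Matrix.transpose_mul, Matrix.mul_assoc,
    Matrix.star_eq_conjTranspose]

theorem isUnit_sqrtm (hP : P.PosDef) : IsUnit (sqrtm hP) := by
  have hdet : IsUnit ((sqrtm hP).det * (sqrtm hP).det) := by
    rw [← det_mul, sqrtm_mul_self]
    exact hP.det_pos.ne'.isUnit
  exact (isUnit_iff_isUnit_det _).2 (IsUnit.mul_iff.1 hdet).1

end

namespace Matrix

variable {m 𝔸 : Type*} [Fintype m] [DecidableEq m] [NormedCommRing 𝔸] [NormedAlgebra ℚ 𝔸]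
  [CompleteSpace 𝔸]

theorem exp_conj_mul_mul_exp_conj_transpose {S M : Matrix m m 𝔸} (hS : IsUnit S)
    (hSsymm : S.IsSymm) (hM : M.IsSymm) :
    exp (S * M * S⁻¹) * (S * S) * exp (S * M * S⁻¹)ᵀ = S * exp (2 • M) * S := by
  have hd : IsUnit S.det := (isUnit_iff_isUnit_det S).1 hS
  have hT : (S * M * S⁻¹)ᵀ = S⁻¹ * M * S := by
    rw [transpose_mul, transpose_mul, transpose_nonsing_inv, hSsymm.eq, hM.eq, Matrix.mul_assoc]
  rw [hT, exp_conj _ _ hS, exp_conj' _ _ hS, exp_nsmul, pow_two]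
  calc S * exp M * S⁻¹ * (S * S) * (S⁻¹ * exp M * S)
      = S * exp M * (S⁻¹ * S) * (S * S⁻¹) * exp M * S := by noncomm_ring
    _ = S * (exp M * exp M) * S := by
      rw [nonsing_inv_mul _ hd, mul_nonsing_inv _ hd]; noncomm_ring

end Matrix

theorem stmt_7_general {n : ℕ} {P0 : Matrix (Fin n) (Fin n) ℝ}
    (hP0 : P0.PosDef)
    (L : Matrix (Fin n) (Fin n) ℝ) (hL : L.IsSymm)
    (A : Matrix (Fin n) (Fin n) ℝ)
    (hA : A = (1 / 2 : ℝ) • (sqrtm hP0 * L * (sqrtm hP0)⁻¹))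
    (P : ℝ → Matrix (Fin n) (Fin n) ℝ)
    (hP : ∀ t : ℝ, P t = NormedSpace.exp (t • A) * P0 * NormedSpace.exp (t • Aᵀ)) :
    ∀ t : ℝ, P t = sqrtm hP0 * NormedSpace.exp (t • L) * sqrtm hP0 := by
  intro t
  have htA : t • A = sqrtm hP0 * ((t / 2) • L) * (sqrtm hP0)⁻¹ := by
    rw [hA, smul_smul, Matrix.mul_smul, Matrix.smul_mul]
    ring_nf
  have hhalf : 2 • ((t / 2) • L) = t • L := by
    rw [two_smul, ← add_smul, add_halves]
  have key := exp_conj_mul_mul_exp_conj_transpose (isUnit_sqrtm hP0) (isSymm_sqrtm hP0)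
    (hL.smul (t / 2))
  rwa [sqrtm_mul_self, hhalf, ← htA, transpose_smul, ← hP] at key

theorem stmt_7 {n : ℕ} {P0 P1 : Matrix (Fin n) (Fin n) ℝ}
    (hP0 : P0.PosDef) (hP1 : P1.PosDef)
    (L : Matrix (Fin n) (Fin n) ℝ) (hL : L.IsSymm)
    (hexpL : NormedSpace.exp L = (sqrtm hP0)⁻¹ * P1 * (sqrtm hP0)⁻¹)
    (A : Matrix (Fin n) (Fin n) ℝ)
    (hA : A = (1 / 2 : ℝ) • (sqrtm hP0 * L * (sqrtm hP0)⁻¹))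
    (P : ℝ → Matrix (Fin n) (Fin n) ℝ)
    (hP : ∀ t : ℝ, P t = NormedSpace.exp (t • A) * P0 * NormedSpace.exp (t • Aᵀ)) :
    ∀ t : ℝ, P t = sqrtm hP0 * NormedSpace.exp (t • L) * sqrtm hP0 :=
  stmt_7_general hP0 L hL A hA P hP
end

section
/- For any symmetric positive definite P and any real n×n matrix A, 4 trace(P^{-1} A P A') ≥ 2 trace(A A) + 2 trace(P^{-1} A P A'), i.e., trace(P^{-1} A P A') ≥ trace(A A). -/
/-!
Write `P = S Sᵀ` with `S` invertible (e.g. `S = √P`) and put `B = S⁻¹ A S`. Then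
`tr (A A) = tr (B B)` and `tr (P⁻¹ A P Aᵀ) = tr (B Bᵀ)`, and `tr (B B) ≤ tr (B Bᵀ)` because
`0 ≤ tr ((B - Bᵀ) (B - Bᵀ)ᵀ) = 2 tr (B Bᵀ) - 2 tr (B B)`.
-/

open Matrix

namespace Matrix

variable {m n R : Type*} [Fintype m] [Fintype n]

theorem trace_mul_transpose_self_nonneg [CommRing R] [LinearOrder R] [IsStrictOrderedRing R]
    (M : Matrix m n R) : 0 ≤ (M * Mᵀ).trace :=
  Finset.sum_nonneg fun _ _ => Finset.sum_nonneg fun _ _ => mul_self_nonneg _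

theorem trace_mul_self_le_trace_mul_transpose_self [CommRing R] [LinearOrder R]
    [IsStrictOrderedRing R] (B : Matrix m m R) : (B * B).trace ≤ (B * Bᵀ).trace := by
  have h := trace_mul_transpose_self_nonneg (B - Bᵀ)
  have hTT : (Bᵀ * Bᵀ).trace = (B * B).trace := by
    rw [← transpose_mul, trace_transpose]
  have hTB : (Bᵀ * B).trace = (B * Bᵀ).trace := trace_mul_comm _ _
  simp only [transpose_sub, transpose_transpose, sub_mul, mul_sub, trace_sub, hTT, hTB] at h
  linarith

variable [DecidableEq m] [CommRing R]

theorem trace_conj_mul_conj {S : Matrix m m R} (hS : IsUnit S) (A : Matrix m m R) :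
    (S⁻¹ * A * S * (S⁻¹ * A * S)).trace = (A * A).trace := by
  have hS' : S * S⁻¹ = 1 := mul_nonsing_inv S ((isUnit_iff_isUnit_det S).mp hS)
  calc (S⁻¹ * A * S * (S⁻¹ * A * S)).trace
      = (S⁻¹ * (A * (S * S⁻¹) * A) * S).trace := by simp only [Matrix.mul_assoc]
    _ = (A * A).trace := by rw [hS', Matrix.mul_one, trace_conj' hS]

theorem trace_conj_mul_transpose_conj (S A : Matrix m m R) :
    (S⁻¹ * A * S * (S⁻¹ * A * S)ᵀ).trace = ((S * Sᵀ)⁻¹ * A * (S * Sᵀ) * Aᵀ).trace := by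
  rw [Matrix.mul_inv_rev, ← transpose_nonsing_inv]
  simp only [transpose_mul, Matrix.mul_assoc]
  rw [trace_mul_comm (S⁻¹ᵀ)]
  simp only [Matrix.mul_assoc]

theorem trace_mul_self_le_trace_inv_mul_mul_mul_transpose [LinearOrder R] [IsStrictOrderedRing R]
    {S : Matrix m m R} (hS : IsUnit S) (A : Matrix m m R) :
    (A * A).trace ≤ ((S * Sᵀ)⁻¹ * A * (S * Sᵀ) * Aᵀ).trace := by
  rw [← trace_conj_mul_conj hS, ← trace_conj_mul_transpose_conj]
  exact trace_mul_self_le_trace_mul_transpose_self _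

open scoped MatrixOrder in
theorem PosDef.exists_isUnit_eq_mul_transpose {P : Matrix m m ℝ} (hP : P.PosDef) :
    ∃ S : Matrix m m ℝ, IsUnit S ∧ P = S * Sᵀ := by
  refine ⟨CFC.sqrt P, (isStrictlyPositive_iff_posDef.mpr hP).isUnit_cfcSqrt, ?_⟩
  rw [← conjTranspose_eq_transpose_of_trivial, (CFC.sqrt_nonneg P).posSemidef.1.eq,
    CFC.sqrt_mul_sqrt_self P hP.posSemidef.nonneg]

end Matrix

theorem stmt_9 {n : ℕ} {P : Matrix (Fin n) (Fin n) ℝ} (hP : P.PosDef)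
    (A : Matrix (Fin n) (Fin n) ℝ) :
    (A * A).trace ≤ (P⁻¹ * A * P * Aᵀ).trace := by
  obtain ⟨S, hS, rfl⟩ := hP.exists_isUnit_eq_mul_transpose
  exact trace_mul_self_le_trace_inv_mul_mul_mul_transpose hS A
end

section
/- Let A be a real n×n matrix with symmetric part A_s and antisymmetric part A_a, ε real, P0 SPD, T_t = exp((1+ε) A_a t) exp((A_s + ε A_a') t), A_t = exp((1+ε) A_a t) A exp((1+ε) A_a' t), and P_t = T_t P0 T_t'. Then dP_t/dt = A_t P_t + P_t A_t'. -/
/-!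
Write `A = B + C` with `B = (1 + ε) A_a` skew-symmetric and `C = A_s + ε A_aᵀ`. The product rule gives
`d/dt (e^{tB} e^{tC}) = e^{tB} (B + C) e^{tC}`, and since `e^{tBᵀ} = e^{-tB}` is the inverse of
`e^{tB}`, this equals `(e^{tB} A e^{tBᵀ}) T_t = A_t T_t`. Differentiating the congruence
`P_t = T_t P_0 T_tᵀ` by the product rule once more yields `A_t P_t + P_t A_tᵀ`.
-/

open Matrix

open NormedSpace

theorem hasDerivAt_exp_smul_mul_exp_smul {𝕂 𝔸 : Type*} [RCLike 𝕂] [NormedRing 𝔸]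
    [NormedAlgebra 𝕂 𝔸] [CompleteSpace 𝔸] (B C : 𝔸) (t : 𝕂) :
    HasDerivAt (fun s : 𝕂 => exp (s • B) * exp (s • C))
      (exp (t • B) * (B + C) * exp (t • C)) t := by
  refine ((hasDerivAt_exp_smul_const B t).mul (hasDerivAt_exp_smul_const' C t)).congr_deriv ?_
  noncomm_ring

theorem Matrix.exp_transpose_mul_exp_of_transpose_eq_neg {m 𝔸 : Type*} [Fintype m]
    [DecidableEq m] [NormedCommRing 𝔸] [NormedAlgebra ℚ 𝔸] [CompleteSpace 𝔸]
    {S : Matrix m m 𝔸} (hS : Sᵀ = -S) : exp Sᵀ * exp S = 1 := by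
  rw [hS, Matrix.exp_neg]
  exact Matrix.nonsing_inv_mul _ ((Matrix.isUnit_iff_isUnit_det _).mp (Matrix.isUnit_exp S))

section MatrixCalculus

open scoped Matrix.Norms.Operator

variable {𝕜 m n : Type*} [NontriviallyNormedField 𝕜] [CompleteSpace 𝕜] [Fintype m] [Fintype n]

theorem HasDerivAt.matrix_transpose {T : 𝕜 → Matrix m n 𝕜} {T' : Matrix m n 𝕜} {t : 𝕜}
    (hT : HasDerivAt T T' t) : HasDerivAt (fun s => (T s)ᵀ) T'ᵀ t :=
  (Matrix.transposeLinearEquiv m n 𝕜 𝕜).toLinearMap.toContinuousLinearMap.hasFDerivAt.comp_hasDerivAt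
    t hT

theorem HasDerivAt.matrix_apply {T : 𝕜 → Matrix m n 𝕜} {T' : Matrix m n 𝕜} {t : 𝕜}
    (hT : HasDerivAt T T' t) (i : m) (j : n) : HasDerivAt (fun s => T s i j) (T' i j) t :=
  (Matrix.entryLinearMap 𝕜 𝕜 i j).toContinuousLinearMap.hasFDerivAt.comp_hasDerivAt t hT

theorem HasDerivAt.mul_mul_transpose [DecidableEq m] {T : 𝕜 → Matrix m m 𝕜} {D : Matrix m m 𝕜}
    {t : 𝕜} (hT : HasDerivAt T (D * T t) t) (P₀ : Matrix m m 𝕜) :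
    HasDerivAt (fun s => T s * P₀ * (T s)ᵀ)
      (D * (T t * P₀ * (T t)ᵀ) + T t * P₀ * (T t)ᵀ * Dᵀ) t := by
  refine ((hT.mul_const P₀).mul hT.matrix_transpose).congr_deriv ?_
  rw [Matrix.transpose_mul]
  noncomm_ring

variable {𝕂 : Type*} [RCLike 𝕂] [DecidableEq m]

theorem hasDerivAt_exp_smul_mul_exp_smul_of_transpose_eq_neg {B : Matrix m m 𝕂} (hB : Bᵀ = -B)
    (C : Matrix m m 𝕂) (t : 𝕂) :
    HasDerivAt (fun s => exp (s • B) * exp (s • C))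
      (exp (t • B) * (B + C) * exp (t • Bᵀ) * (exp (t • B) * exp (t • C))) t := by
  have htB : (t • B)ᵀ = -(t • B) := by rw [Matrix.transpose_smul, hB, smul_neg]
  refine (hasDerivAt_exp_smul_mul_exp_smul B C t).congr_deriv ?_
  rw [← Matrix.transpose_smul, Matrix.mul_assoc (_ * (B + C)), ← Matrix.mul_assoc (exp _ᵀ),
    Matrix.exp_transpose_mul_exp_of_transpose_eq_neg htB, Matrix.one_mul]
  -- the sides differ only in instances: those of the operator norm versus the plain matrix ones
  rfl

theorem hasDerivAt_exp_congruence_apply {B : Matrix m m 𝕂} (hB : Bᵀ = -B) {C : Matrix m m 𝕂}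
    {T : 𝕂 → Matrix m m 𝕂} (hT : ∀ s, T s = exp (s • B) * exp (s • C)) (P₀ : Matrix m m 𝕂)
    (t : 𝕂) (i j : m) :
    HasDerivAt (fun s => (T s * P₀ * (T s)ᵀ) i j)
      ((exp (t • B) * (B + C) * exp (t • Bᵀ) * (T t * P₀ * (T t)ᵀ) +
        T t * P₀ * (T t)ᵀ * (exp (t • B) * (B + C) * exp (t • Bᵀ))ᵀ) i j) t := by
  have hT_deriv := hasDerivAt_exp_smul_mul_exp_smul_of_transpose_eq_neg hB C t
  rw [← funext hT, ← hT t] at hT_deriv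
  exact (hT_deriv.mul_mul_transpose P₀).matrix_apply i j

end MatrixCalculus

theorem stmt_13_general {n : ℕ} (A : Matrix (Fin n) (Fin n) ℝ) (ε : ℝ)
    {P0 : Matrix (Fin n) (Fin n) ℝ}
    (As Aa : Matrix (Fin n) (Fin n) ℝ)
    (hAs : As = (1 / 2 : ℝ) • (A + Aᵀ)) (hAa : Aa = (1 / 2 : ℝ) • (A - Aᵀ))
    (T At P : ℝ → Matrix (Fin n) (Fin n) ℝ)
    (hT : ∀ t : ℝ, T t = NormedSpace.exp (((1 + ε) * t) • Aa) *
        NormedSpace.exp (t • (As + ε • Aaᵀ)))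
    (hAt : ∀ t : ℝ, At t = NormedSpace.exp (((1 + ε) * t) • Aa) * A *
        NormedSpace.exp (((1 + ε) * t) • Aaᵀ))
    (hP : ∀ t : ℝ, P t = T t * P0 * (T t)ᵀ) :
    ∀ (t : ℝ) (i j : Fin n),
      HasDerivAt (fun s : ℝ => P s i j) ((At t * P t + P t * (At t)ᵀ) i j) t := by
  intro t i j
  have hAa_skew : Aaᵀ = -Aa := by
    rw [hAa, transpose_smul, transpose_sub, transpose_transpose]
    module
  have hB_skew : ((1 + ε) • Aa)ᵀ = -((1 + ε) • Aa) := by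
    rw [transpose_smul, hAa_skew, smul_neg]
  have hA_split : (1 + ε) • Aa + (As + ε • Aaᵀ) = A := by
    rw [hAa_skew, hAs, hAa]
    module
  have hT_split (s : ℝ) : T s = exp (s • (1 + ε) • Aa) * exp (s • (As + ε • Aaᵀ)) := by
    rw [hT s, smul_smul, mul_comm s]
  have hAt_split : At t = exp (t • (1 + ε) • Aa) * A * exp (t • ((1 + ε) • Aa)ᵀ) := by
    rw [hAt t, transpose_smul, smul_smul, smul_smul, mul_comm t]
  simp only [hP, hAt_split, ← hA_split]
  exact hasDerivAt_exp_congruence_apply hB_skew hT_split P0 t i j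

theorem stmt_13 {n : ℕ} (A : Matrix (Fin n) (Fin n) ℝ) (ε : ℝ)
    {P0 : Matrix (Fin n) (Fin n) ℝ} (hP0 : P0.PosDef)
    (As Aa : Matrix (Fin n) (Fin n) ℝ)
    (hAs : As = (1 / 2 : ℝ) • (A + Aᵀ)) (hAa : Aa = (1 / 2 : ℝ) • (A - Aᵀ))
    (T At P : ℝ → Matrix (Fin n) (Fin n) ℝ)
    (hT : ∀ t : ℝ, T t = NormedSpace.exp (((1 + ε) * t) • Aa) *
        NormedSpace.exp (t • (As + ε • Aaᵀ)))
    (hAt : ∀ t : ℝ, At t = NormedSpace.exp (((1 + ε) * t) • Aa) * A *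
        NormedSpace.exp (((1 + ε) * t) • Aaᵀ))
    (hP : ∀ t : ℝ, P t = T t * P0 * (T t)ᵀ) :
    ∀ (t : ℝ) (i j : Fin n),
      HasDerivAt (fun s : ℝ => P s i j) ((At t * P t + P t * (At t)ᵀ) i j) t :=
  stmt_13_general A ε As Aa hAs hAa T At P hT hAt hP
end
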